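/- Let 𝓐 be an additive category and let C• be a (bounded or unbounded) cochain complex in 𝓐 such that the differential d^n: C^n → C^{n+1} has a kernel. Then, with τ^{≤n}C• the canonical truncation (… → C^{n-2} → C^{n-1} → ker(d^n) → 0 → …) and τ^{≥n+1}C• the canonical truncation (… → 0 → ker(d^n) → C^n → C^{n+1} → …), the sequence τ^{≤n}C• → C• → τ^{≥n+1}C• extends to a distinguished triangle τ^{≤n}C• → C• → τ^{≥n+1}C• → Σ(τ^{≤n}C•) in the homotopy category K(𝓐); in other words, C• is an extension of τ^{≥n+1}C• by τ^{≤n}C• in K(𝓐). -/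

import Mathlib

open CategoryTheory Limits ZeroObject

namespace OneSidedExact

variable {𝓐 : Type*} [Category 𝓐] [Limits.HasZeroMorphisms 𝓐]

/-- Data exhibiting a complex `T` together with a chain map `ι : T ⟶ C` as the canonical
truncation `τ^{≤n} C` of `C`, relative to a chosen kernel `i : K ⟶ C^n` of `d^n`:
`ι` is an isomorphism in degrees `< n`, `T^n ≅ K` compatibly with `i`, and `T` vanishes
in degrees `> n`. -/
structure TruncLEData (C : CochainComplex 𝓐 ℤ) (n : ℤ) {K : 𝓐} (i : K ⟶ C.X n) where
  T : CochainComplex 𝓐 ℤ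
  ι : T ⟶ C
  iso_lt : ∀ m : ℤ, m < n → IsIso (ι.f m)
  isoK : T.X n ≅ K
  compat : isoK.hom ≫ i = ι.f n
  zero_gt : ∀ m : ℤ, n < m → IsZero (T.X m)

/-- Data exhibiting a complex `T` together with a chain map `π : C ⟶ T` as the canonical
truncation `τ^{≥ n+1} C` of `C`, relative to a chosen kernel `i : K ⟶ C^n` of `d^n`:
`T` vanishes in degrees `< n - 1`, has `K` in degree `n - 1` (with differential
corresponding to `i` and with `π` corresponding in degree `n - 1` to the canonical
factorization of `d^{n-1}` through `K`), and `π` is an isomorphism in degrees `≥ n`. -/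
structure TruncGEData (C : CochainComplex 𝓐 ℤ) (n : ℤ) {K : 𝓐} (i : K ⟶ C.X n) where
  T : CochainComplex 𝓐 ℤ
  π : C ⟶ T
  zero_lt : ∀ m : ℤ, m < n - 1 → IsZero (T.X m)
  isoK : T.X (n - 1) ≅ K
  compat_d : isoK.inv ≫ T.d (n - 1) n = i ≫ π.f n
  compat_p : π.f (n - 1) ≫ isoK.hom ≫ i = C.d (n - 1) n
  iso_ge : ∀ m : ℤ, n ≤ m → IsIso (π.f m)

end OneSidedExact

/-!
In degree `p` the mapping cone of `ι : τ^{≤n} C ⟶ C` is `(τ^{≤n} C)^{p+1} ⊕ C^p`. For `p < n - 1`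
the first summand is `C^{p+1}` via `ι`; these summands, together with the summands `C^p` for
`p ≤ n - 1`, form the contractible cone of the identity of the stupid truncation `σ^{≤ n-1} C`.
What remains is `(τ^{≤n} C)^n ≅ K` in degree `n - 1` and `C^p` in degrees `p ≥ n`, i.e.
`τ^{≥ n+1} C`. So the cone is homotopy equivalent to `τ^{≥ n+1} C`, with `inr` corresponding to
`π`, and the triangle is the mapping-cone triangle of `ι` transported along this equivalence.
Since `i` is a monomorphism, the two factorizations of `d^{n-1}` through `K` agree, which makes
the maps compatible with the differentials.
-/

open CochainComplex HomComplex Pretriangulated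

namespace HomotopyCategory

variable {C : Type*} [Category C] [Preadditive C] [HasZeroObject C] [HasBinaryBiproducts C]

theorem exists_distinguished_of_homotopyEquiv_mappingCone {X Y Z : CochainComplex C ℤ}
    (f : X ⟶ Y) (e : HomotopyEquiv (mappingCone f) Z) :
    ∃ h : (quotient C (ComplexShape.up ℤ)).obj Z ⟶
        ((quotient C (ComplexShape.up ℤ)).obj X)⟦(1 : ℤ)⟧,
      Triangle.mk ((quotient C (ComplexShape.up ℤ)).map f)
          ((quotient C (ComplexShape.up ℤ)).map (mappingCone.inr f ≫ e.hom)) h ∈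
        distTriang (HomotopyCategory C (ComplexShape.up ℤ)) := by
  set Q := quotient C (ComplexShape.up ℤ)
  refine ⟨Q.map e.inv ≫ (mappingCone.triangleh f).mor₃,
    isomorphic_distinguished _ (mappingCone_triangleh_distinguished f) _
      (Triangle.isoMk _ _ (Iso.refl _) (Iso.refl _) (isoOfHomotopyEquiv e).symm
        ((Category.comp_id _).trans (Category.id_comp _).symm) ?_ ?_)⟩
  · show Q.map (mappingCone.inr f ≫ e.hom) ≫ Q.map e.inv = 𝟙 _ ≫ Q.map (mappingCone.inr f)
    rw [Category.id_comp, Q.map_comp, Category.assoc, ← Q.map_comp,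
      eq_of_homotopy _ _ e.homotopyHomInvId, Q.map_id, Category.comp_id]
  · exact (congrArg (_ ≫ ·) (CategoryTheory.Functor.map_id _ _)).trans (Category.comp_id _)

end HomotopyCategory

namespace OneSidedExact

variable {𝓐 : Type*} [Category 𝓐] [Preadditive 𝓐] {C : CochainComplex 𝓐 ℤ} {n : ℤ} {K : 𝓐}
  {i : K ⟶ C.X n}

namespace TruncLEData

variable (TL : TruncLEData C n i)

lemma isoK_inv_ι : TL.isoK.inv ≫ TL.ι.f n = i := by
  rw [← TL.compat, Iso.inv_hom_id_assoc]

noncomputable def ιInv : Cochain C TL.T 0 :=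
  Cochain.ofHoms fun p => if hp : p < n then haveI := TL.iso_lt p hp; inv (TL.ι.f p) else 0

lemma ιInv_v_of_le (p : ℤ) (hp : n ≤ p) : TL.ιInv.v p p (add_zero p) = 0 := by
  simp [ιInv, not_lt.mpr hp]

lemma ιInv_v_of_lt (p : ℤ) (hp : p < n) :
    TL.ιInv.v p p (add_zero p) = haveI := TL.iso_lt p hp; inv (TL.ι.f p) := by
  simp [ιInv, hp]

lemma ι_comp_ιInv_v (p : ℤ) (hp : p < n) : TL.ι.f p ≫ TL.ιInv.v p p (add_zero p) = 𝟙 _ := by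
  have := TL.iso_lt p hp
  simp [TL.ιInv_v_of_lt p hp]

lemma ιInv_v_comp_ι (p : ℤ) (hp : p < n) :
    TL.ιInv.v p p (add_zero p) ≫ TL.ι.f p = 𝟙 _ := by
  have := TL.iso_lt p hp
  simp [TL.ιInv_v_of_lt p hp]

lemma ιInv_v_comp_d (p : ℤ) (hp : p + 1 < n) :
    TL.ιInv.v p p (add_zero p) ≫ TL.T.d p (p + 1) =
      C.d p (p + 1) ≫ TL.ιInv.v (p + 1) (p + 1) (add_zero _) := by
  have := TL.iso_lt p (by omega)
  have := TL.iso_lt (p + 1) hp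
  rw [TL.ιInv_v_of_lt p (by omega), TL.ιInv_v_of_lt (p + 1) hp, IsIso.inv_comp_eq,
    ← Category.assoc, TL.ι.comm, Category.assoc, IsIso.hom_inv_id, Category.comp_id]

end TruncLEData

namespace TruncGEData

variable (TG : TruncGEData C n i)

noncomputable def πInv : Cochain TG.T C 0 :=
  Cochain.ofHoms fun p => if hp : n ≤ p then haveI := TG.iso_ge p hp; inv (TG.π.f p) else 0

lemma πInv_v_of_lt (p : ℤ) (hp : p < n) : TG.πInv.v p p (add_zero p) = 0 := by
  simp [πInv, not_le.mpr hp]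

lemma πInv_v_of_le (p : ℤ) (hp : n ≤ p) :
    TG.πInv.v p p (add_zero p) = haveI := TG.iso_ge p hp; inv (TG.π.f p) := by
  simp [πInv, hp]

lemma π_comp_πInv_v (p : ℤ) (hp : n ≤ p) : TG.π.f p ≫ TG.πInv.v p p (add_zero p) = 𝟙 _ := by
  have := TG.iso_ge p hp
  simp [TG.πInv_v_of_le p hp]

lemma πInv_v_comp_π (p : ℤ) (hp : n ≤ p) : TG.πInv.v p p (add_zero p) ≫ TG.π.f p = 𝟙 _ := by
  have := TG.iso_ge p hp
  simp [TG.πInv_v_of_le p hp]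

lemma d_comp_πInv_v : TG.T.d (n - 1) n ≫ TG.πInv.v n n (add_zero n) = TG.isoK.hom ≫ i := by
  have := TG.iso_ge n le_rfl
  rw [TG.πInv_v_of_le n le_rfl, IsIso.comp_inv_eq, Category.assoc, ← TG.compat_d,
    Iso.hom_inv_id_assoc]

lemma πInv_v_comp_d (p : ℤ) (hp : n ≤ p) :
    TG.πInv.v p p (add_zero p) ≫ C.d p (p + 1) =
      TG.T.d p (p + 1) ≫ TG.πInv.v (p + 1) (p + 1) (add_zero _) := by
  have := TG.iso_ge p hp
  have := TG.iso_ge (p + 1) (by omega)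
  rw [TG.πInv_v_of_le p hp, TG.πInv_v_of_le (p + 1) (by omega), IsIso.inv_comp_eq,
    ← Category.assoc, TG.π.comm, Category.assoc, IsIso.hom_inv_id, Category.comp_id]

end TruncGEData

section

variable (TL : TruncLEData C n i) (TG : TruncGEData C n i)

lemma ι_f_comp_π_f_comp_isoK_hom [Mono i] :
    TL.ι.f (n - 1) ≫ TG.π.f (n - 1) ≫ TG.isoK.hom = TL.T.d (n - 1) n ≫ TL.isoK.hom := by
  rw [← cancel_mono i, Category.assoc, Category.assoc, Category.assoc, TL.compat, TG.compat_p]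
  exact TL.ι.comm (n - 1) n

lemma ιInv_v_comp_d_pred [Mono i] :
    TL.ιInv.v (n - 1) (n - 1) (add_zero _) ≫ TL.T.d (n - 1) n =
      TG.π.f (n - 1) ≫ TG.isoK.hom ≫ TL.isoK.inv := by
  rw [← cancel_mono TL.isoK.hom, Category.assoc, ← ι_f_comp_π_f_comp_isoK_hom TL TG,
    reassoc_of% (TL.ιInv_v_comp_ι (n - 1) (by omega))]
  simp

lemma δ_single_isoK_eq_ofHom_ι_comp_π [Mono i] :
    δ (-1) 0 (Cochain.single (TL.isoK.hom ≫ TG.isoK.inv : TL.T.X n ⟶ TG.T.X (n - 1)) (-1)) =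
      Cochain.ofHom (TL.ι ≫ TG.π) := by
  rw [Cochain.δ_single _ (-1) 0 (by omega) (n - 1) n (by omega) (by omega)]
  ext p
  simp only [Cochain.add_v, Int.negOnePow_zero, one_smul, Cochain.ofHom_v,
    HomologicalComplex.comp_f]
  rcases lt_trichotomy p n with hp | rfl | hp
  · rw [Cochain.single_v_eq_zero _ _ _ _ _ hp.ne, zero_add]
    rcases eq_or_ne p (n - 1) with rfl | hp'
    · rw [Cochain.single_v, ← Category.assoc, ← ι_f_comp_π_f_comp_isoK_hom TL TG]
      simp
    · rw [Cochain.single_v_eq_zero _ _ _ _ _ hp']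
      exact ((TG.zero_lt p (by omega)).eq_of_tgt _ _).symm
  · rw [Cochain.single_v, Cochain.single_v_eq_zero _ _ _ _ _ (by omega), add_zero,
      Category.assoc, TG.compat_d, ← Category.assoc, TL.compat]
  · exact (TL.zero_gt p hp).eq_of_src _ _

noncomputable def truncGEToConeCocycle : Cocycle TG.T TL.T 1 :=
  Cocycle.mk (Cochain.single (TG.isoK.hom ≫ TL.isoK.inv : TG.T.X (n - 1) ⟶ TL.T.X n) 1) 2 rfl (by
    rw [Cochain.δ_single _ 1 2 rfl (n - 2) (n + 1) (by omega) rfl,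
      (TL.zero_gt (n + 1) (by omega)).eq_of_tgt (_ ≫ _) 0,
      (TG.zero_lt (n - 2) (by omega)).eq_of_src (_ ≫ _) 0,
      Cochain.single_zero, Cochain.single_zero, smul_zero, add_zero])

lemma δ_πInv_add_truncGEToConeCocycle_comp :
    δ 0 1 TG.πInv + (truncGEToConeCocycle TL TG).1.comp (Cochain.ofHom TL.ι) (add_zero 1) = 0 := by
  ext p q hpq
  rw [Cochain.add_v, δ_v 0 1 rfl _ p q hpq p q (by omega) hpq]
  simp only [truncGEToConeCocycle, Cocycle.mk_coe, Cochain.comp_zero_cochain_v,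
    Cochain.ofHom_v, Cochain.zero_v, Int.negOnePow_one, Units.neg_smul, one_smul]
  rcases lt_trichotomy p (n - 1) with hp | rfl | hp
  · rw [TG.πInv_v_of_lt p (by omega), TG.πInv_v_of_lt q (by omega),
      Cochain.single_v_eq_zero _ _ _ _ _ hp.ne]
    simp
  · obtain rfl : n = q := by omega
    rw [TG.πInv_v_of_lt (n - 1) (by omega), TG.d_comp_πInv_v, Cochain.single_v, Category.assoc,
      TL.isoK_inv_ι]
    simp
  · obtain rfl : q = p + 1 := by omega
    rw [TG.πInv_v_comp_d p (by omega), Cochain.single_v_eq_zero _ _ _ _ _ hp.ne']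
    simp

end

section

variable [HasBinaryBiproducts 𝓐] (TL : TruncLEData C n i) (TG : TruncGEData C n i)

noncomputable def coneToTruncGE [Mono i] : mappingCone TL.ι ⟶ TG.T :=
  mappingCone.desc TL.ι _ TG.π (δ_single_isoK_eq_ofHom_ι_comp_π TL TG)

lemma inr_coneToTruncGE [Mono i] : mappingCone.inr TL.ι ≫ coneToTruncGE TL TG = TG.π :=
  mappingCone.inr_desc _ _ _ _

noncomputable def truncGEToCone : TG.T ⟶ mappingCone TL.ι :=
  mappingCone.lift TL.ι (truncGEToConeCocycle TL TG) TG.πInv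
    (δ_πInv_add_truncGEToConeCocycle_comp TL TG)

lemma truncGEToCone_f_pred : (truncGEToCone TL TG).f (n - 1) =
    TG.isoK.hom ≫ TL.isoK.inv ≫ (mappingCone.inl TL.ι).v n (n - 1) (by omega) := by
  rw [truncGEToCone, mappingCone.lift_f _ _ _ _ (n - 1) n (by omega), truncGEToConeCocycle,
    Cocycle.mk_coe, Cochain.single_v, TG.πInv_v_of_lt (n - 1) (by omega)]
  simp

lemma truncGEToCone_f_of_le (p : ℤ) (hp : n ≤ p) : (truncGEToCone TL TG).f p =
    TG.πInv.v p p (add_zero p) ≫ (mappingCone.inr TL.ι).f p := by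
  rw [truncGEToCone, mappingCone.lift_f _ _ _ _ p (p + 1) rfl, truncGEToConeCocycle,
    Cocycle.mk_coe, Cochain.single_v_eq_zero _ _ _ _ _ (by omega)]
  simp

lemma truncGEToCone_comp_coneToTruncGE [Mono i] :
    truncGEToCone TL TG ≫ coneToTruncGE TL TG = 𝟙 TG.T := by
  ext p
  rcases lt_trichotomy p (n - 1) with hp | rfl | hp
  · exact (TG.zero_lt p hp).eq_of_src _ _
  · simp [truncGEToCone_f_pred, coneToTruncGE]
  · have hp' : n ≤ p := by omega
    simp [truncGEToCone_f_of_le TL TG p hp', coneToTruncGE, TG.πInv_v_comp_π p hp']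

lemma inl_comp_coneToTruncGE_comp_truncGEToCone [Mono i] :
    (mappingCone.inl TL.ι).comp (Cochain.ofHom (coneToTruncGE TL TG ≫ truncGEToCone TL TG))
        (add_zero (-1)) =
      δ (-2) (-1) 0 + (Cochain.ofHom TL.ι).comp
          (-TL.ιInv.comp (mappingCone.inl TL.ι) (zero_add (-1))) (zero_add (-1)) +
        (mappingCone.inl TL.ι).comp (Cochain.ofHom (𝟙 _)) (add_zero (-1)) := by
  ext p q hpq
  simp only [δ_zero, zero_add, Cochain.add_v, Cochain.comp_zero_cochain_v,
    Cochain.zero_cochain_comp_v, Cochain.neg_v, Cochain.ofHom_v, HomologicalComplex.comp_f,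
    HomologicalComplex.id_f, Category.comp_id, coneToTruncGE, mappingCone.inl_v_desc_f_assoc]
  rcases lt_trichotomy p n with hp | hp | hp
  · rw [Cochain.single_v_eq_zero _ _ _ _ _ hp.ne, Preadditive.comp_neg,
      reassoc_of% (TL.ι_comp_ιInv_v p hp)]
    simp
  · obtain rfl : n = p := hp.symm
    obtain rfl : n - 1 = q := by omega
    rw [Cochain.single_v, truncGEToCone_f_pred, TL.ιInv_v_of_le n le_rfl]
    simp
  · exact (TL.zero_gt p hp).eq_of_src _ _

lemma TruncLEData.δ_ιInv_comp_inl_v (p q : ℤ) (hpq : p + 1 = q) :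
    (δ (-1) 0 (TL.ιInv.comp (mappingCone.inl TL.ι) (zero_add (-1)))).v p p (add_zero p) =
      TL.ιInv.v p p (add_zero p) ≫ TL.ι.f p ≫ (mappingCone.inr TL.ι).f p -
        (TL.ιInv.v p p (add_zero p) ≫ TL.T.d p q - C.d p q ≫ TL.ιInv.v q q (add_zero q)) ≫
          (mappingCone.inl TL.ι).v q p (by omega) := by
  rw [δ_v (-1) 0 (by omega) _ p p (add_zero p) (p - 1) q (by omega) hpq]
  simp only [Cochain.zero_cochain_comp_v, Category.assoc,
    mappingCone.inl_v_d TL.ι p (p - 1) q (by omega) (by omega), Int.negOnePow_zero, one_smul,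
    Preadditive.comp_sub, Preadditive.sub_comp]
  abel

lemma inr_comp_coneToTruncGE_comp_truncGEToCone [Mono i] :
    Cochain.ofHom (mappingCone.inr TL.ι ≫ coneToTruncGE TL TG ≫ truncGEToCone TL TG) =
      δ (-1) 0 (-TL.ιInv.comp (mappingCone.inl TL.ι) (zero_add (-1))) +
        Cochain.ofHom (mappingCone.inr TL.ι ≫ 𝟙 _) := by
  ext p
  simp only [Cochain.ofHom_v, δ_neg, Cochain.add_v, Cochain.neg_v, HomologicalComplex.comp_f,
    Category.comp_id, coneToTruncGE, mappingCone.inr_f_desc_f_assoc]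
  rcases lt_trichotomy p (n - 1) with hp | hp | hp
  · rw [(TG.zero_lt p hp).eq_of_tgt (TG.π.f p) 0, TL.δ_ιInv_comp_inl_v p (p + 1) rfl,
      TL.ιInv_v_comp_d p (by omega), reassoc_of% (TL.ιInv_v_comp_ι p (by omega))]
    simp
  · obtain rfl : n - 1 = p := hp.symm
    rw [TL.δ_ιInv_comp_inl_v (n - 1) n (by omega), truncGEToCone_f_pred,
      ιInv_v_comp_d_pred TL TG, reassoc_of% (TL.ιInv_v_comp_ι (n - 1) (by omega)),
      TL.ιInv_v_of_le n le_rfl]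
    simp
  · have hp' : n ≤ p := by omega
    rw [truncGEToCone_f_of_le TL TG p hp', reassoc_of% (TG.π_comp_πInv_v p hp'),
      TL.δ_ιInv_comp_inl_v p (p + 1) rfl, TL.ιInv_v_of_le p hp',
      TL.ιInv_v_of_le (p + 1) (by omega)]
    simp

noncomputable def coneHomotopyEquivTruncGE [Mono i] :
    HomotopyEquiv (mappingCone TL.ι) TG.T where
  hom := coneToTruncGE TL TG
  inv := truncGEToCone TL TG
  homotopyHomInvId := mappingCone.descHomotopy TL.ι _ _ 0 _
    (inl_comp_coneToTruncGE_comp_truncGEToCone TL TG)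
    (inr_comp_coneToTruncGE_comp_truncGEToCone TL TG)
  homotopyInvHomId := Homotopy.ofEq (truncGEToCone_comp_coneToTruncGE TL TG)

end

end OneSidedExact

open OneSidedExact Pretriangulated

/-- Let `𝓐` be an additive category and `C` a cochain complex in `𝓐`
such that the differential `d^n : C^n ⟶ C^{n+1}` has a kernel `i : K ⟶ C^n`.  Then, for
any realizations `τ^{≤n} C` and `τ^{≥ n+1} C` of the canonical truncations, the sequence
`τ^{≤n} C ⟶ C ⟶ τ^{≥ n+1} C` extends to a distinguished triangle
`τ^{≤n} C ⟶ C ⟶ τ^{≥ n+1} C ⟶ Σ (τ^{≤n} C)` in the homotopy category `K(𝓐)`;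
in other words `C` is an extension of `τ^{≥ n+1} C` by `τ^{≤n} C` in `K(𝓐)`. -/
theorem truncation_triangle {𝓐 : Type*} [Category 𝓐] [Preadditive 𝓐]
    [HasZeroObject 𝓐] [HasBinaryBiproducts 𝓐]
    (C : CochainComplex 𝓐 ℤ) (n : ℤ) {K : 𝓐} (i : K ⟶ C.X n)
    (w : i ≫ C.d n (n + 1) = 0) (hi : Nonempty (IsLimit (KernelFork.ofι i w)))
    (TL : TruncLEData C n i) (TG : TruncGEData C n i) :
    ∃ h : (HomotopyCategory.quotient 𝓐 (ComplexShape.up ℤ)).obj TG.T ⟶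
        ((HomotopyCategory.quotient 𝓐 (ComplexShape.up ℤ)).obj TL.T)⟦(1 : ℤ)⟧,
      Triangle.mk ((HomotopyCategory.quotient 𝓐 (ComplexShape.up ℤ)).map TL.ι)
          ((HomotopyCategory.quotient 𝓐 (ComplexShape.up ℤ)).map TG.π) h ∈
        distTriang (HomotopyCategory 𝓐 (ComplexShape.up ℤ)) := by
  have : Mono i := mono_of_isLimit_fork hi.some
  rw [← inr_coneToTruncGE TL TG]
  exact HomotopyCategory.exists_distinguished_of_homotopyEquiv_mappingCone TL.ι
    (coneHomotopyEquivTruncGE TL TG)
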